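/- arXiv:2603.15865 — 4 statements merged into one kernel-verified Lean document; each statement's English description precedes it below -/
import Mathlib

section
/- Let x* be an exposed point of the reachable set R_𝒰(T) of ẋ = Ax + Bu from the origin, where 𝒰 = { u ∈ ℝ^m : u̲ ≤ u ≤ ū } is a box. Then any control u achieving x* satisfies, for each component i and almost every t ∈ [0,T]: if cᵀ e^{A(T−t)} b_i > 0 then u_i(t) = ū_i, and if cᵀ e^{A(T−t)} b_i < 0 then u_i(t) = u̲_i, where c is a vector strictly exposing x* (i.e., ⟨c, x*⟩ > ⟨c, y⟩ for all y ∈ R_𝒰(T), y ≠ x*), and b_i is the i-th column of B. -/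
open MeasureTheory Matrix

section aux
attribute [local instance] Matrix.linftyOpNormedAddCommGroup Matrix.linftyOpNormedRing
  Matrix.linftyOpNormedAlgebra

theorem myexp_cont {n : ℕ} (A : Matrix (Fin n) (Fin n) ℝ) (T : ℝ) :
    Continuous (fun t : ℝ => NormedSpace.exp ((T - t) • A)) := by
  have h1 : Continuous (fun t : ℝ => (T - t) • A) := by fun_prop
  exact NormedSpace.exp_continuous.comp h1

theorem aux_integrable {n m : ℕ} (A : Matrix (Fin n) (Fin n) ℝ) (B : Matrix (Fin n) (Fin m) ℝ)
    (T : ℝ) (ul ub : Fin m → ℝ)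
    (v : ℝ → Fin m → ℝ) (hv : Measurable v)
    (hadm : ∀ᵐ τ ∂(volume.restrict (Set.Ioc (0:ℝ) T)), ul ≤ v τ ∧ v τ ≤ ub) :
    IntegrableOn (fun τ => NormedSpace.exp ((T - τ) • A) *ᵥ (B *ᵥ v τ)) (Set.Ioc 0 T) volume := by
  set M : ℝ → Matrix (Fin n) (Fin n) ℝ := fun t => NormedSpace.exp ((T - t) • A) with hM
  have hMc : Continuous M := myexp_cont A T
  -- measurability
  have hmeas : Measurable (fun τ => M τ *ᵥ (B *ᵥ v τ)) := by
    apply measurable_pi_lambda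
    intro j
    simp only [Matrix.mulVec, dotProduct]
    apply Finset.measurable_sum
    intro k _
    apply Measurable.mul
    · exact ((continuous_apply k).comp ((continuous_apply j).comp hMc)).measurable
    · apply Finset.measurable_sum
      intro l _
      exact measurable_const.mul (hv.eval)
  -- bound on ‖M τ‖ over [0, T]
  obtain ⟨K, hK⟩ : ∃ K, ∀ τ ∈ Set.Icc (0:ℝ) T, ‖M τ‖ ≤ K :=
    (isCompact_Icc).exists_bound_of_continuousOn hMc.continuousOn
  set C2 : ℝ := max ‖ul‖ ‖ub‖ with hC2
  have hC2nn : 0 ≤ C2 := le_trans (norm_nonneg ul) (le_max_left _ _)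
  have hbd : ∀ᵐ τ ∂(volume.restrict (Set.Ioc (0:ℝ) T)),
      ‖M τ *ᵥ (B *ᵥ v τ)‖ ≤ K * (‖B‖ * C2) := by
    have hmem : ∀ᵐ τ ∂(volume.restrict (Set.Ioc (0:ℝ) T)), τ ∈ Set.Ioc (0:ℝ) T :=
      ae_restrict_mem measurableSet_Ioc
    filter_upwards [hadm, hmem] with τ hb hmemτ
    have hvle : ‖v τ‖ ≤ C2 := by
      rw [pi_norm_le_iff_of_nonneg hC2nn]
      intro k
      rw [Real.norm_eq_abs, abs_le]
      have habsl : |ul k| ≤ C2 := by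
        simpa only [Real.norm_eq_abs, ← hC2] using (norm_le_pi_norm ul k).trans (le_max_left ‖ul‖ ‖ub‖)
      have habsu : |ub k| ≤ C2 := by
        simpa only [Real.norm_eq_abs, ← hC2] using (norm_le_pi_norm ub k).trans (le_max_right ‖ul‖ ‖ub‖)
      constructor
      · calc -C2 ≤ -|ul k| := neg_le_neg habsl
          _ ≤ ul k := neg_abs_le _
          _ ≤ v τ k := hb.1 k
      · exact (hb.2 k).trans ((le_abs_self _).trans habsu)
    have h1 : ‖M τ *ᵥ (B *ᵥ v τ)‖ ≤ ‖M τ‖ * ‖B *ᵥ v τ‖ := Matrix.linfty_opNorm_mulVec _ _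
    have h2 : ‖B *ᵥ v τ‖ ≤ ‖B‖ * ‖v τ‖ := Matrix.linfty_opNorm_mulVec _ _
    have hKτ : ‖M τ‖ ≤ K := hK τ (Set.mem_Icc_of_Ioc hmemτ)
    calc ‖M τ *ᵥ (B *ᵥ v τ)‖ ≤ ‖M τ‖ * ‖B *ᵥ v τ‖ := h1
      _ ≤ K * (‖B‖ * C2) := by
          apply mul_le_mul hKτ (h2.trans ?_) (norm_nonneg _) (le_trans (norm_nonneg _) hKτ)
          exact mul_le_mul_of_nonneg_left hvle (norm_nonneg B)
  haveI : IsFiniteMeasure (volume.restrict (Set.Ioc (0:ℝ) T)) := by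
    constructor
    simp [Real.volume_Ioc]
  exact ⟨hmeas.aestronglyMeasurable, MeasureTheory.HasFiniteIntegral.of_bounded hbd⟩
end aux

/-- Any admissible control reaching an exposed point of the box-constrained
reachable set must, for a.e. time and each component, be at the upper bound where the
switching function `cᵀ e^{A(T−t)} b_i` is positive and at the lower bound where it is negative,
`c` being a vector strictly exposing the point. -/
theorem stmt4 {n m : ℕ} (A : Matrix (Fin n) (Fin n) ℝ) (B : Matrix (Fin n) (Fin m) ℝ)
    (T : ℝ) (hT : 0 < T) (ul ub : Fin m → ℝ) (hbox : ul ≤ ub)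
    (xstar : Fin n → ℝ) (c : Fin n → ℝ)
    (hexp : ∀ y ∈ {x : Fin n → ℝ | ∃ u : ℝ → Fin m → ℝ, Measurable u ∧
        (∀ᵐ τ ∂(volume.restrict (Set.Ioc (0 : ℝ) T)), ul ≤ u τ ∧ u τ ≤ ub) ∧
        x = ∫ τ in (0 : ℝ)..T, NormedSpace.exp ((T - τ) • A) *ᵥ (B *ᵥ u τ)},
      y ≠ xstar → c ⬝ᵥ y < c ⬝ᵥ xstar)
    (u : ℝ → Fin m → ℝ) (hu : Measurable u)
    (hadm : ∀ᵐ τ ∂(volume.restrict (Set.Ioc (0 : ℝ) T)), ul ≤ u τ ∧ u τ ≤ ub)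
    (hreach : xstar = ∫ τ in (0 : ℝ)..T, NormedSpace.exp ((T - τ) • A) *ᵥ (B *ᵥ u τ)) :
    ∀ i : Fin m, ∀ᵐ t ∂(volume.restrict (Set.Ioc (0 : ℝ) T)),
      (0 < c ⬝ᵥ (NormedSpace.exp ((T - t) • A) *ᵥ (fun j => B j i)) → u t i = ub i) ∧
      (c ⬝ᵥ (NormedSpace.exp ((T - t) • A) *ᵥ (fun j => B j i)) < 0 → u t i = ul i) := by
  intro i
  set μ := volume.restrict (Set.Ioc (0:ℝ) T) with hμ
  set M : ℝ → Matrix (Fin n) (Fin n) ℝ := fun t => NormedSpace.exp ((T - t) • A) with hMdef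
  set w : ℝ → Fin m → ℝ := fun t => (c ᵥ* (M t)) ᵥ* B with hwdef
  have hMc : Continuous M := myexp_cont A T
  have hwc : Continuous fun t => w t i := by
    simp only [hwdef, Matrix.vecMul, dotProduct]
    apply continuous_finset_sum
    intro k _
    apply Continuous.mul _ continuous_const
    apply continuous_finset_sum
    intro l _
    exact Continuous.mul continuous_const ((continuous_apply k).comp ((continuous_apply l).comp hMc))
  -- modified control
  set s : ℝ → ℝ := fun t => if 0 < w t i then ub i else if w t i < 0 then ul i else u t i with hsdef
  set u' : ℝ → Fin m → ℝ := fun t => Function.update (u t) i (s t) with hu'def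
  have hs : Measurable s := by
    apply Measurable.ite (measurableSet_lt measurable_const hwc.measurable) measurable_const
    exact Measurable.ite (measurableSet_lt hwc.measurable measurable_const) measurable_const hu.eval
  have hu' : Measurable u' := by
    apply measurable_pi_lambda
    intro j
    simp only [hu'def, Function.update_apply]
    by_cases hji : j = i
    · simpa [hji] using hs
    · simpa [hji] using hu.eval
  have hadm' : ∀ᵐ τ ∂μ, ul ≤ u' τ ∧ u' τ ≤ ub := by
    filter_upwards [hadm] with τ hb
    have hval : ∀ j, ul j ≤ u' τ j ∧ u' τ j ≤ ub j := by
      intro j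
      by_cases hji : j = i
      · subst hji
        have hval : u' τ j = s τ := by simp [hu'def]
        rw [hval]
        simp only [hsdef]
        by_cases h1 : 0 < w τ j
        · rw [if_pos h1]; exact ⟨hbox j, le_refl _⟩
        · rw [if_neg h1]
          by_cases h2 : w τ j < 0
          · rw [if_pos h2]; exact ⟨le_refl _, hbox j⟩
          · rw [if_neg h2]; exact ⟨hb.1 j, hb.2 j⟩
      · have hval : u' τ j = u τ j := by simp [hu'def, hji]
        rw [hval]; exact ⟨hb.1 j, hb.2 j⟩
    exact ⟨fun j => (hval j).1, fun j => (hval j).2⟩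
  -- the linear functional
  set L : (Fin n → ℝ) →L[ℝ] ℝ := ∑ j, c j • ContinuousLinearMap.proj j with hLdef
  have hL : ∀ x, L x = c ⬝ᵥ x := by
    intro x
    simp [hLdef, dotProduct, ContinuousLinearMap.sum_apply, smul_eq_mul]
  -- pointwise algebra
  have hpt : ∀ (v : Fin m → ℝ) (t : ℝ), c ⬝ᵥ (M t *ᵥ (B *ᵥ v)) = w t ⬝ᵥ v := by
    intro v t
    rw [dotProduct_mulVec, dotProduct_mulVec]
  -- integrability
  have hint_u : IntegrableOn (fun τ => M τ *ᵥ (B *ᵥ u τ)) (Set.Ioc 0 T) volume :=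
    aux_integrable A B T ul ub u hu hadm
  have hint_u' : IntegrableOn (fun τ => M τ *ᵥ (B *ᵥ u' τ)) (Set.Ioc 0 T) volume :=
    aux_integrable A B T ul ub u' hu' hadm'
  have hint1 : Integrable (fun τ => w τ ⬝ᵥ u τ) μ :=
    (L.integrable_comp hint_u).congr (ae_of_all _ fun τ => (hL _).trans (hpt _ _))
  have hint2 : Integrable (fun τ => w τ ⬝ᵥ u' τ) μ :=
    (L.integrable_comp hint_u').congr (ae_of_all _ fun τ => (hL _).trans (hpt _ _))
  -- dot products of reach points as scalar integrals
  have hdot : ∀ (v : ℝ → Fin m → ℝ), IntegrableOn (fun τ => M τ *ᵥ (B *ᵥ v τ)) (Set.Ioc 0 T) volume →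
      c ⬝ᵥ (∫ τ in (0:ℝ)..T, M τ *ᵥ (B *ᵥ v τ)) = ∫ τ, w τ ⬝ᵥ v τ ∂μ := by
    intro v hint
    rw [intervalIntegral.integral_of_le hT.le]
    calc c ⬝ᵥ (∫ τ in Set.Ioc (0:ℝ) T, M τ *ᵥ (B *ᵥ v τ)) 
        = L (∫ τ in Set.Ioc (0:ℝ) T, M τ *ᵥ (B *ᵥ v τ)) := (hL _).symm
      _ = ∫ τ, L (M τ *ᵥ (B *ᵥ v τ)) ∂μ := (L.integral_comp_comm hint).symm
      _ = ∫ τ, w τ ⬝ᵥ v τ ∂μ := by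
          exact integral_congr_ae (ae_of_all _ fun τ => (hL _).trans (hpt _ _))
  have hxstar : c ⬝ᵥ xstar = ∫ τ, w τ ⬝ᵥ u τ ∂μ := by
    rw [hreach]; exact hdot u hint_u
  set y' : Fin n → ℝ := ∫ τ in (0:ℝ)..T, M τ *ᵥ (B *ᵥ u' τ) with hy'def
  have hy'mem : y' ∈ {x : Fin n → ℝ | ∃ u : ℝ → Fin m → ℝ, Measurable u ∧
      (∀ᵐ τ ∂(volume.restrict (Set.Ioc (0 : ℝ) T)), ul ≤ u τ ∧ u τ ≤ ub) ∧
      x = ∫ τ in (0 : ℝ)..T, NormedSpace.exp ((T - τ) • A) *ᵥ (B *ᵥ u τ)} :=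
    ⟨u', hu', hadm', rfl⟩
  have hy'c : c ⬝ᵥ y' = ∫ τ, w τ ⬝ᵥ u' τ ∂μ := hdot u' hint_u'
  -- the pointwise nonnegative function
  set h : ℝ → ℝ := fun τ => w τ i * (u' τ i - u τ i) with hhdef
  have hh_eq : ∀ τ, h τ = (w τ ⬝ᵥ u' τ) - (w τ ⬝ᵥ u τ) := by
    intro τ
    rw [← dotProduct_sub]
    show w τ i * (u' τ i - u τ i) = ∑ j, w τ j * (u' τ - u τ) j
    rw [Finset.sum_eq_single i]
    · simp
    · intro j _ hji
      simp [hu'def, Function.update_apply, hji]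
    · intro hni
      exact absurd (Finset.mem_univ i) hni
  have hInt_h : Integrable h μ := by
    apply (hint2.sub hint1).congr
    exact ae_of_all _ fun τ => (hh_eq τ).symm
  have hnn : 0 ≤ᵐ[μ] h := by
    filter_upwards [hadm] with τ hb
    simp only [Pi.zero_apply, hhdef]
    rcases lt_trichotomy 0 (w τ i) with hpos | heq | hneg
    · have : u' τ i = ub i := by simp [hu'def, hsdef, if_pos hpos]
      rw [this]
      exact mul_nonneg hpos.le (sub_nonneg.mpr (hb.2 i))
    · rw [← heq, zero_mul]
    · have : u' τ i = ul i := by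
        simp only [hu'def, Function.update_self, hsdef]
        rw [if_neg (not_lt.mpr hneg.le), if_pos hneg]
      rw [this]
      have h1 : ul i - u τ i ≤ 0 := sub_nonpos.mpr (hb.1 i)
      nlinarith
  have hle : ∫ τ, h τ ∂μ ≤ 0 := by
    have heq : ∫ τ, h τ ∂μ = c ⬝ᵥ y' - c ⬝ᵥ xstar := by
      calc ∫ τ, h τ ∂μ = ∫ τ, ((w τ ⬝ᵥ u' τ) - (w τ ⬝ᵥ u τ)) ∂μ := by
            apply integral_congr_ae; exact ae_of_all _ hh_eq
        _ = (∫ τ, w τ ⬝ᵥ u' τ ∂μ) - ∫ τ, w τ ⬝ᵥ u τ ∂μ := integral_sub hint2 hint1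
        _ = c ⬝ᵥ y' - c ⬝ᵥ xstar := by rw [hy'c, hxstar]
    rw [heq]
    by_cases hy : y' = xstar
    · rw [hy]; simp
    · have := hexp y' hy'mem hy
      linarith
  have hzero : h =ᵐ[μ] 0 := by
    have h0 : ∫ τ, h τ ∂μ = 0 := le_antisymm hle (integral_nonneg_of_ae hnn)
    exact (integral_eq_zero_iff_of_nonneg_ae hnn hInt_h).mp h0
  -- switching function identity
  have hswitch : ∀ t, c ⬝ᵥ (M t *ᵥ (fun j => B j i)) = w t i := by
    intro t
    rw [dotProduct_mulVec]
    rfl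
  filter_upwards [hzero, hadm] with t h0 hb
  have h0' : w t i * (u' t i - u t i) = 0 := h0
  constructor
  · intro hpos
    rw [hswitch] at hpos
    have hval : u' t i = ub i := by simp [hu'def, hsdef, if_pos hpos]
    rcases mul_eq_zero.mp h0' with h | h
    · exact absurd h (ne_of_gt hpos)
    · rw [hval] at h
      linarith [sub_eq_zero.mp h]
  · intro hneg
    rw [hswitch] at hneg
    have hval : u' t i = ul i := by
      simp only [hu'def, Function.update_self, hsdef]
      rw [if_neg (not_lt.mpr hneg.le), if_pos hneg]
    rcases mul_eq_zero.mp h0' with h | h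
    · exact absurd h (ne_of_lt hneg)
    · rw [hval] at h
      linarith [sub_eq_zero.mp h]
end

section
/- Under the hypotheses that A ∈ ℝ^{2×2} is diagonalizable with real distinct eigenvalues, m = 1 (single input b ∈ ℝ²), and controls satisfy u̲ ≤ u(t) ≤ ū, define for η ∈ [0,T]: ξ₁(η) = ū ∫₀^η e^{A(T−τ)} b dτ + u̲ ∫_η^T e^{A(T−τ)} b dτ and ξ₂(η) = u̲ ∫₀^η e^{A(T−τ)} b dτ + ū ∫_η^T e^{A(T−τ)} b dτ. Then the reachable set from the origin at time T equals the convex hull of the union of the images of ξ₁ and ξ₂ over [0,T]. -/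
open MeasureTheory Matrix


private lemma antitone_split (g : ℝ → ℝ) (hg : Antitone g) {T : ℝ} (hT : 0 ≤ T) :
    ∃ η ∈ Set.Icc (0:ℝ) T, (∀ τ ∈ Set.Ico (0:ℝ) η, 0 ≤ g τ) ∧ ∀ τ ∈ Set.Ioc η T, g τ ≤ 0 := by
  set S : Set ℝ := insert 0 {τ | τ ∈ Set.Icc (0:ℝ) T ∧ 0 ≤ g τ} with hS
  have hne : S.Nonempty := ⟨0, Set.mem_insert _ _⟩
  have hbdd : BddAbove S := by
    refine ⟨T, ?_⟩
    rintro x (rfl | ⟨hx, _⟩)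
    · exact hT
    · exact hx.2
  refine ⟨sSup S, ⟨le_csSup hbdd (Set.mem_insert _ _), csSup_le hne ?_⟩, ?_, ?_⟩
  · rintro x (rfl | ⟨hx, _⟩)
    · exact hT
    · exact hx.2
  · intro τ hτ
    obtain ⟨x, hxS, hτx⟩ := exists_lt_of_lt_csSup hne hτ.2
    have hx : 0 ≤ g x := by
      rcases hxS with rfl | ⟨_, hx⟩
      · exact absurd hτx (not_lt.2 hτ.1)
      · exact hx
    exact hx.trans (hg hτx.le)
  · intro τ hτ
    by_contra hc
    push_neg at hc
    have : τ ∈ S := Or.inr ⟨⟨le_trans (le_csSup hbdd (Set.mem_insert _ _)) hτ.1.le, hτ.2⟩, hc.le⟩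
    exact absurd (le_csSup hbdd this) (not_le.2 hτ.1)

private lemma monoOrAnti (a c d e : ℝ) :
    Monotone (fun τ => a * Real.exp (c - d * τ) + e) ∨
      Antitone (fun τ => a * Real.exp (c - d * τ) + e) := by
  rcases le_total 0 a with ha | ha <;> rcases le_total 0 d with hd | hd
  · right; intro s t hst; dsimp only
    have h1 : Real.exp (c - d * t) ≤ Real.exp (c - d * s) := Real.exp_le_exp.2 (by nlinarith)
    nlinarith
  · left; intro s t hst; dsimp only
    have h1 : Real.exp (c - d * s) ≤ Real.exp (c - d * t) := Real.exp_le_exp.2 (by nlinarith)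
    nlinarith
  · left; intro s t hst; dsimp only
    have h1 : Real.exp (c - d * t) ≤ Real.exp (c - d * s) := Real.exp_le_exp.2 (by nlinarith)
    nlinarith
  · right; intro s t hst; dsimp only
    have h1 : Real.exp (c - d * s) ≤ Real.exp (c - d * t) := Real.exp_le_exp.2 (by nlinarith)
    nlinarith

private lemma bdd_intervalIntegrable {E : Type*} [NormedAddCommGroup E] [NormedSpace ℝ E]
    {u : ℝ → ℝ} (hu : Measurable u) {T ul ub : ℝ} (hT : 0 ≤ T)
    (hb : ∀ᵐ τ ∂(volume.restrict (Set.Ioc (0:ℝ) T)), ul ≤ u τ ∧ u τ ≤ ub)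
    {F : ℝ → E} (hF : Continuous F) :
    IntervalIntegrable (fun τ => u τ • F τ) volume 0 T := by
  obtain ⟨M, hM⟩ := isCompact_Icc.exists_bound_of_continuousOn (hF.continuousOn (s := Set.Icc 0 T))
  rw [intervalIntegrable_iff_integrableOn_Ioc_of_le hT]
  have hmeas : AEStronglyMeasurable (fun τ => u τ • F τ) (volume.restrict (Set.Ioc (0:ℝ) T)) :=
    (hu.aestronglyMeasurable).smul hF.aestronglyMeasurable
  refine Integrable.mono' (g := fun _ => (max |ul| |ub|) * (max M 0)) ?_ hmeas ?_
  · exact integrable_const _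
  · filter_upwards [hb, ae_restrict_mem measurableSet_Ioc] with τ hbτ hmem
    rw [norm_smul, Real.norm_eq_abs]
    have h1 : |u τ| ≤ max |ul| |ub| := by
      rcases abs_cases (u τ) with ⟨h, _⟩ | ⟨h, _⟩ <;>
        [exact le_max_of_le_right (by rw [h]; exact hbτ.2.trans (le_abs_self _));
         exact le_max_of_le_left (by rw [h]; exact (neg_le_neg hbτ.1).trans (neg_le_abs _))]
    have h2 : ‖F τ‖ ≤ max M 0 := le_max_of_le_left (hM τ ⟨hmem.1.le, hmem.2⟩)
    exact mul_le_mul h1 h2 (norm_nonneg _) ((abs_nonneg _).trans h1)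

private lemma sub_intervalIntegrable {E : Type*} [NormedAddCommGroup E] {G : ℝ → E} {T : ℝ}
    (hT : 0 ≤ T) (hG : IntervalIntegrable G volume 0 T) {η : ℝ} (hη : η ∈ Set.Icc (0:ℝ) T) :
    IntervalIntegrable G volume 0 η ∧ IntervalIntegrable G volume η T := by
  constructor
  · refine hG.mono_set ?_
    rw [Set.uIcc_of_le hη.1, Set.uIcc_of_le hT]
    exact Set.Icc_subset_Icc le_rfl hη.2
  · refine hG.mono_set ?_
    rw [Set.uIcc_of_le hη.2, Set.uIcc_of_le hT]
    exact Set.Icc_subset_Icc hη.1 le_rfl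

private lemma isCompact_convexHull' {K : Set (Fin 2 → ℝ)} (hK : IsCompact K) :
    IsCompact (convexHull ℝ K) := by
  classical
  rcases K.eq_empty_or_nonempty with rfl | ⟨x₀, hx₀⟩
  · simpa using isCompact_empty
  have hmap : Continuous fun wz : (Fin 3 → ℝ) × (Fin 3 → Fin 2 → ℝ) => ∑ i, wz.1 i • wz.2 i := by
    refine continuous_finset_sum _ fun i _ => ?_
    exact ((continuous_apply i).comp continuous_fst).smul ((continuous_apply i).comp continuous_snd)
  have hS : IsCompact ((stdSimplex ℝ (Fin 3)) ×ˢ (Set.univ.pi fun _ : Fin 3 => K)) :=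
    (isCompact_stdSimplex ℝ (Fin 3)).prod (isCompact_univ_pi fun _ => hK)
  have himg := hS.image hmap
  have heq : convexHull ℝ K =
      (fun wz : (Fin 3 → ℝ) × (Fin 3 → Fin 2 → ℝ) => ∑ i, wz.1 i • wz.2 i) ''
        ((stdSimplex ℝ (Fin 3)) ×ˢ (Set.univ.pi fun _ : Fin 3 => K)) := by
    apply Set.Subset.antisymm
    · intro x hx
      obtain ⟨ι, hfin, z, w, hzK, hai, hwpos, hw1, hsum⟩ := eq_pos_convex_span_of_mem_convexHull hx
      letI := hfin
      have hcard : Fintype.card ι ≤ 3 := by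
        have h1 := hai.card_le_finrank_succ
        have h2 : Module.finrank ℝ ↥(vectorSpan ℝ (Set.range z)) ≤ Module.finrank ℝ (Fin 2 → ℝ) :=
          Submodule.finrank_le _
        have h3 : Module.finrank ℝ (Fin 2 → ℝ) = 2 := by simp
        omega
      obtain ⟨e⟩ := Function.Embedding.nonempty_of_card_le (α := ι) (β := Fin 3) (by simpa using hcard)
      set w' : Fin 3 → ℝ := fun i => if h : ∃ j, e j = i then w h.choose else 0 with hw'
      set z' : Fin 3 → (Fin 2 → ℝ) := fun i => if h : ∃ j, e j = i then z h.choose else x₀ with hz'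
      have hface : ∀ j : ι, w' (e j) = w j ∧ z' (e j) = z j := by
        intro j
        have hex : ∃ j', e j' = e j := ⟨j, rfl⟩
        have hch : hex.choose = j := e.injective hex.choose_spec
        constructor <;> simp [hw', hz', dif_pos hex, hch]
      have hzero : ∀ i : Fin 3, i ∉ Finset.univ.image e → w' i = 0 := by
        intro i hi
        have : ¬ ∃ j, e j = i := by
          rintro ⟨j, rfl⟩
          exact hi (Finset.mem_image.2 ⟨j, Finset.mem_univ _, rfl⟩)
        simp [hw', dif_neg this]
      have hsum' : ∀ (f : Fin 3 → Fin 2 → ℝ) (g : ℝ → (Fin 2 → ℝ) → (Fin 2 → ℝ)),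
          True := fun _ _ => trivial
      refine ⟨(w', z'), ⟨⟨fun i => ?_, ?_⟩, fun i _ => ?_⟩, ?_⟩
      · by_cases h : ∃ j, e j = i
        · simpa [hw', dif_pos h] using (hwpos _).le
        · simp [hw', dif_neg h]
      · -- sum of w' = 1
        have h2 : ∑ i ∈ Finset.univ.image e, w' i = ∑ i : Fin 3, w' i :=
          Finset.sum_subset (Finset.subset_univ _) (fun i _ hi => hzero i hi)
        have h1 : ∑ i ∈ Finset.univ.image e, w' i = ∑ j : ι, w' (e j) :=
          Finset.sum_image (by intro x _ y _ hxy; exact e.injective hxy)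
        rw [← h2, h1]
        rw [← hw1]
        exact Finset.sum_congr rfl fun j _ => (hface j).1
      · -- z' i ∈ K
        by_cases h : ∃ j, e j = i
        · have : z h.choose ∈ K := hzK ⟨h.choose, rfl⟩
          simpa [hz', dif_pos h] using this
        · simpa [hz', dif_neg h] using hx₀
      · -- the sum equals x
        dsimp only
        have h2 : ∑ i ∈ Finset.univ.image e, w' i • z' i = ∑ i : Fin 3, w' i • z' i :=
          Finset.sum_subset (Finset.subset_univ _)
            (fun i _ hi => by rw [hzero i hi, zero_smul])
        have h1 : ∑ i ∈ Finset.univ.image e, w' i • z' i = ∑ j : ι, w' (e j) • z' (e j) :=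
          Finset.sum_image (by intro x _ y _ hxy; exact e.injective hxy)
        rw [← h2, h1, ← hsum]
        exact Finset.sum_congr rfl fun j _ => by rw [(hface j).1, (hface j).2]
    · rintro _ ⟨⟨w, z⟩, ⟨hw, hz⟩, rfl⟩
      exact mem_convexHull_of_exists_fintype w z hw.1 hw.2 (fun i => hz i (Set.mem_univ i)) rfl
  rw [heq]; exact himg

private lemma key (p q : Fin 2 → ℝ) (l1 l2 T ul ub : ℝ) (hT : 0 < T) (hbox : ul ≤ ub)
    (F : ℝ → Fin 2 → ℝ)
    (hFdef : F = fun τ => Real.exp ((T - τ) * l1) • p + Real.exp ((T - τ) * l2) • q)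
    (ξ₁ ξ₂ : ℝ → Fin 2 → ℝ)
    (hξ₁ : ∀ η, ξ₁ η = ub • (∫ τ in (0 : ℝ)..η, F τ) + ul • ∫ τ in η..T, F τ)
    (hξ₂ : ∀ η, ξ₂ η = ul • (∫ τ in (0 : ℝ)..η, F τ) + ub • ∫ τ in η..T, F τ) :
    {x : Fin 2 → ℝ | ∃ u : ℝ → ℝ, Measurable u ∧
      (∀ᵐ τ ∂(volume.restrict (Set.Ioc (0 : ℝ) T)), ul ≤ u τ ∧ u τ ≤ ub) ∧
      x = ∫ τ in (0 : ℝ)..T, u τ • F τ} =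
    convexHull ℝ (ξ₁ '' Set.Icc (0 : ℝ) T ∪ ξ₂ '' Set.Icc (0 : ℝ) T) := by
  have hTle : (0:ℝ) ≤ T := hT.le
  have hFc : Continuous F := by
    rw [hFdef]; fun_prop
  have hFI : ∀ a b : ℝ, IntervalIntegrable F volume a b := fun a b => hFc.intervalIntegrable a b
  -- the admissible set
  set R : Set (Fin 2 → ℝ) := {x : Fin 2 → ℝ | ∃ u : ℝ → ℝ, Measurable u ∧
      (∀ᵐ τ ∂(volume.restrict (Set.Ioc (0 : ℝ) T)), ul ≤ u τ ∧ u τ ≤ ub) ∧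
      x = ∫ τ in (0 : ℝ)..T, u τ • F τ} with hR
  -- bang-bang membership
  have hmem : ∀ η ∈ Set.Icc (0:ℝ) T, ∀ c d : ℝ, ul ≤ c → c ≤ ub → ul ≤ d → d ≤ ub →
      (c • (∫ τ in (0:ℝ)..η, F τ) + d • ∫ τ in η..T, F τ) ∈ R := by
    intro η hη c d hc1 hc2 hd1 hd2
    classical
    refine ⟨fun τ => if τ < η then c else d, Measurable.ite measurableSet_Iio
      measurable_const measurable_const, ?_, ?_⟩
    · refine Filter.Eventually.of_forall fun τ => ?_
      by_cases h : τ < η <;> simp [h, hc1, hc2, hd1, hd2]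
    · have hne : ∀ᵐ x : ℝ, x ≠ η := by
        rw [MeasureTheory.ae_iff]
        have : {x : ℝ | ¬ x ≠ η} = {η} := by ext x; simp
        rw [this]; exact Real.volume_singleton
      have e1 : (∫ τ in (0:ℝ)..η, (if τ < η then c else d) • F τ) = ∫ τ in (0:ℝ)..η, c • F τ := by
        refine intervalIntegral.integral_congr_ae ?_
        filter_upwards [hne] with x hx hmem
        rw [Set.uIoc_of_le hη.1] at hmem
        have : x < η := lt_of_le_of_ne hmem.2 hx
        simp [this]
      have e2 : (∫ τ in η..T, (if τ < η then c else d) • F τ) = ∫ τ in η..T, d • F τ := by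
        refine intervalIntegral.integral_congr_ae (Filter.Eventually.of_forall fun x hmem => ?_)
        rw [Set.uIoc_of_le hη.2] at hmem
        have : ¬ x < η := not_lt.2 hmem.1.le
        simp [this]
      have hii : IntervalIntegrable (fun τ => (if τ < η then c else d) • F τ) volume 0 T := by
        refine bdd_intervalIntegrable ?_ hTle (ul := ul) (ub := ub) ?_ hFc
        · exact Measurable.ite measurableSet_Iio measurable_const measurable_const
        · refine Filter.Eventually.of_forall fun τ => ?_
          by_cases h : τ < η <;> simp [h, hc1, hc2, hd1, hd2]
      obtain ⟨hii1, hii2⟩ := sub_intervalIntegrable hTle hii hη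
      rw [← intervalIntegral.integral_add_adjacent_intervals hii1 hii2, e1, e2,
        intervalIntegral.integral_smul, intervalIntegral.integral_smul]
  -- convexity of R
  have hconv : Convex ℝ R := by
    rintro x ⟨u₁, hu₁m, hu₁b, rfl⟩ y ⟨u₂, hu₂m, hu₂b, rfl⟩ a b' ha hb' hab
    refine ⟨fun τ => a * u₁ τ + b' * u₂ τ, by fun_prop, ?_, ?_⟩
    · filter_upwards [hu₁b, hu₂b] with τ h1 h2
      have eql : a * ul + b' * ul = ul := by rw [← add_mul, hab, one_mul]
      have equ : a * ub + b' * ub = ub := by rw [← add_mul, hab, one_mul]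
      constructor
      · nlinarith [mul_le_mul_of_nonneg_left h1.1 ha, mul_le_mul_of_nonneg_left h2.1 hb']
      · nlinarith [mul_le_mul_of_nonneg_left h1.2 ha, mul_le_mul_of_nonneg_left h2.2 hb']
    · have e1 := bdd_intervalIntegrable hu₁m hTle hu₁b hFc
      have e2 := bdd_intervalIntegrable hu₂m hTle hu₂b hFc
      have heq : (∫ τ in (0:ℝ)..T, (a * u₁ τ + b' * u₂ τ) • F τ)
          = a • (∫ τ in (0:ℝ)..T, u₁ τ • F τ) + b' • ∫ τ in (0:ℝ)..T, u₂ τ • F τ := by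
        have : (fun τ => (a * u₁ τ + b' * u₂ τ) • F τ)
            = fun τ => a • (u₁ τ • F τ) + b' • (u₂ τ • F τ) := by
          funext τ; simp [add_smul, smul_smul]
        have ia : IntervalIntegrable (fun τ => a • (u₁ τ • F τ)) volume 0 T := e1.smul a
        have ib : IntervalIntegrable (fun τ => b' • (u₂ τ • F τ)) volume 0 T := e2.smul b'
        rw [this, intervalIntegral.integral_add ia ib,
          intervalIntegral.integral_smul, intervalIntegral.integral_smul]
      exact heq.symm
  -- ⊇ direction
  apply Set.Subset.antisymm
  swap
  · apply convexHull_min ?_ hconv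
    rintro x (⟨η, hη, rfl⟩ | ⟨η, hη, rfl⟩)
    · rw [hξ₁ η]; exact hmem η hη ub ul hbox le_rfl le_rfl hbox
    · rw [hξ₂ η]; exact hmem η hη ul ub le_rfl hbox hbox le_rfl
  -- ⊆ direction
  intro x hx
  obtain ⟨u, hum, hub, hxu⟩ := hx
  by_contra hxK
  set K := convexHull ℝ (ξ₁ '' Set.Icc (0 : ℝ) T ∪ ξ₂ '' Set.Icc (0 : ℝ) T) with hKdef
  -- K is compact, hence closed
  have hGc : Continuous fun η => ∫ τ in (0:ℝ)..η, F τ :=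
    intervalIntegral.continuous_primitive hFI 0
  have hHeq : ∀ η : ℝ, (∫ τ in η..T, F τ) = (∫ τ in (0:ℝ)..T, F τ) - ∫ τ in (0:ℝ)..η, F τ := by
    intro η
    rw [eq_sub_iff_add_eq, add_comm]
    exact intervalIntegral.integral_add_adjacent_intervals (hFI 0 η) (hFI η T)
  have hHc : Continuous fun η => ∫ τ in η..T, F τ := by
    have : (fun η => ∫ τ in η..T, F τ)
        = fun η => (∫ τ in (0:ℝ)..T, F τ) - ∫ τ in (0:ℝ)..η, F τ := funext hHeq
    rw [this]; exact continuous_const.sub hGc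
  have hξ₁c : Continuous ξ₁ := by
    have : ξ₁ = fun η => ub • (∫ τ in (0:ℝ)..η, F τ) + ul • ∫ τ in η..T, F τ := funext hξ₁
    rw [this]; exact (hGc.const_smul ub).add (hHc.const_smul ul)
  have hξ₂c : Continuous ξ₂ := by
    have : ξ₂ = fun η => ul • (∫ τ in (0:ℝ)..η, F τ) + ub • ∫ τ in η..T, F τ := funext hξ₂
    rw [this]; exact (hGc.const_smul ul).add (hHc.const_smul ub)
  have hKcl : IsClosed K :=
    (isCompact_convexHull' ((isCompact_Icc.image hξ₁c).union (isCompact_Icc.image hξ₂c))).isClosed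
  obtain ⟨f, u₀, hfK, hfx⟩ := geometric_hahn_banach_closed_point
    (convex_convexHull ℝ _) hKcl hxK
  -- the switching function
  set σ : ℝ → ℝ := fun τ => f (F τ) with hσdef
  have hσc : Continuous σ := f.continuous.comp hFc
  have hσfac : ∀ τ, σ τ = Real.exp ((T - τ) * l2) *
      (f p * Real.exp (T * (l1 - l2) - (l1 - l2) * τ) + f q) := by
    intro τ
    have : σ τ = Real.exp ((T - τ) * l1) * f p + Real.exp ((T - τ) * l2) * f q := by
      rw [hσdef]; dsimp only; rw [hFdef]; dsimp only
      rw [map_add, f.map_smul, f.map_smul, smul_eq_mul, smul_eq_mul]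
    rw [this, show (T - τ) * l1 = (T - τ) * l2 + (T * (l1 - l2) - (l1 - l2) * τ) by ring,
      Real.exp_add]
    ring
  -- f computed on integrals
  have hfint : ∀ a b : ℝ, f (∫ τ in a..b, F τ) = ∫ τ in a..b, σ τ :=
    fun a b => (f.intervalIntegral_comp_comm (hFI a b)).symm
  have huσ : IntervalIntegrable (fun τ => u τ * σ τ) volume 0 T := by
    have := bdd_intervalIntegrable (E := ℝ) hum hTle hub hσc
    simpa [smul_eq_mul] using this
  have hfxu : f x = ∫ τ in (0:ℝ)..T, u τ * σ τ := by
    rw [hxu, ← f.intervalIntegral_comp_comm (bdd_intervalIntegrable hum hTle hub hFc)]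
    simp only [_root_.map_smul, smul_eq_mul]
    rfl
  -- the key inequality
  have keyineq : ∀ η ∈ Set.Icc (0:ℝ) T, ∀ c d : ℝ,
      ((fun τ => u τ * σ τ) ≤ᵐ[volume.restrict (Set.Ioc (0:ℝ) η)] fun τ => c * σ τ) →
      ((fun τ => u τ * σ τ) ≤ᵐ[volume.restrict (Set.Ioc η T)] fun τ => d * σ τ) →
      f x ≤ f (c • (∫ τ in (0:ℝ)..η, F τ) + d • ∫ τ in η..T, F τ) := by
    intro η hη c d hle1 hle2
    have hii := sub_intervalIntegrable hTle huσ hη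
    have hci : ∀ (c' : ℝ) (a b : ℝ), IntervalIntegrable (fun τ => c' * σ τ) volume a b :=
      fun c' a b => (hσc.const_smul c').intervalIntegrable a b
    have hres1 : volume.restrict (Set.Icc (0:ℝ) η) = volume.restrict (Set.Ioc (0:ℝ) η) :=
      Measure.restrict_congr_set Ioc_ae_eq_Icc.symm
    have hres2 : volume.restrict (Set.Icc η T) = volume.restrict (Set.Ioc η T) :=
      Measure.restrict_congr_set Ioc_ae_eq_Icc.symm
    have m1 : (∫ τ in (0:ℝ)..η, u τ * σ τ) ≤ ∫ τ in (0:ℝ)..η, c * σ τ := by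
      refine intervalIntegral.integral_mono_ae_restrict hη.1 hii.1 (hci c 0 η) ?_
      rw [hres1]; exact hle1
    have m2 : (∫ τ in η..T, u τ * σ τ) ≤ ∫ τ in η..T, d * σ τ := by
      refine intervalIntegral.integral_mono_ae_restrict hη.2 hii.2 (hci d η T) ?_
      rw [hres2]; exact hle2
    rw [hfxu, ← intervalIntegral.integral_add_adjacent_intervals hii.1 hii.2 (b := η)]
    rw [map_add, f.map_smul, f.map_smul, smul_eq_mul, smul_eq_mul, hfint, hfint]
    have e1 : (∫ τ in (0:ℝ)..η, c * σ τ) = c * ∫ τ in (0:ℝ)..η, σ τ := by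
      simpa [smul_eq_mul] using intervalIntegral.integral_smul c σ (a := (0:ℝ)) (b := η) (μ := volume)
    have e2 : (∫ τ in η..T, d * σ τ) = d * ∫ τ in η..T, σ τ := by
      simpa [smul_eq_mul] using intervalIntegral.integral_smul d σ (a := η) (b := T) (μ := volume)
    calc (∫ τ in (0:ℝ)..η, u τ * σ τ) + ∫ τ in η..T, u τ * σ τ
        ≤ (∫ τ in (0:ℝ)..η, c * σ τ) + ∫ τ in η..T, d * σ τ := add_le_add m1 m2
      _ = c * (∫ τ in (0:ℝ)..η, σ τ) + d * ∫ τ in η..T, σ τ := by rw [e1, e2]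
  -- monotone / antitone switching structure
  have hMA := monoOrAnti (f p) (T * (l1 - l2)) (l1 - l2) (f q)
  have hne' : ∀ η : ℝ, ∀ᵐ x : ℝ, x ≠ η := by
    intro η
    rw [MeasureTheory.ae_iff]
    have : {x : ℝ | ¬ x ≠ η} = {η} := by ext x; simp
    rw [this]; exact Real.volume_singleton
  rcases hMA with hm | hm
  · -- Monotone: σ ≤ 0 then ≥ 0, use ξ₂
    obtain ⟨η, hη, h1, h2⟩ := antitone_split _ hm.neg hTle
    have hσ1 : ∀ τ ∈ Set.Ico (0:ℝ) η, σ τ ≤ 0 := by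
      intro τ hτ
      have := h1 τ hτ
      rw [hσfac]
      nlinarith [Real.exp_pos ((T - τ) * l2)]
    have hσ2 : ∀ τ ∈ Set.Ioc η T, 0 ≤ σ τ := by
      intro τ hτ
      have := h2 τ hτ
      rw [hσfac]
      nlinarith [Real.exp_pos ((T - τ) * l2)]
    have hle1 : (fun τ => u τ * σ τ) ≤ᵐ[volume.restrict (Set.Ioc (0:ℝ) η)] fun τ => ul * σ τ := by
      have hub' := ae_restrict_of_ae_restrict_of_subset (Set.Ioc_subset_Ioc le_rfl hη.2) hub
      filter_upwards [hub', ae_restrict_mem measurableSet_Ioc, ae_restrict_of_ae (hne' η)]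
        with τ hb hmem hne''
      exact mul_le_mul_of_nonpos_right hb.1 (hσ1 τ ⟨hmem.1.le, lt_of_le_of_ne hmem.2 hne''⟩)
    have hle2 : (fun τ => u τ * σ τ) ≤ᵐ[volume.restrict (Set.Ioc η T)] fun τ => ub * σ τ := by
      have hub2 := ae_restrict_of_ae_restrict_of_subset (Set.Ioc_subset_Ioc hη.1 le_rfl) hub
      filter_upwards [hub2, ae_restrict_mem measurableSet_Ioc] with τ hb hmem
      exact mul_le_mul_of_nonneg_right hb.2 (hσ2 τ hmem)
    have hineq := keyineq η hη ul ub hle1 hle2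
    have hmemK : (ul • (∫ τ in (0:ℝ)..η, F τ) + ub • ∫ τ in η..T, F τ) ∈ K := by
      rw [← hξ₂ η]
      exact subset_convexHull ℝ _ (Or.inr ⟨η, hη, rfl⟩)
    have := hfK _ hmemK
    linarith
  · -- Antitone: σ ≥ 0 then ≤ 0, use ξ₁
    obtain ⟨η, hη, h1, h2⟩ := antitone_split _ hm hTle
    have hσ1 : ∀ τ ∈ Set.Ico (0:ℝ) η, 0 ≤ σ τ := by
      intro τ hτ
      have := h1 τ hτ
      rw [hσfac]
      nlinarith [Real.exp_pos ((T - τ) * l2)]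
    have hσ2 : ∀ τ ∈ Set.Ioc η T, σ τ ≤ 0 := by
      intro τ hτ
      have := h2 τ hτ
      rw [hσfac]
      nlinarith [Real.exp_pos ((T - τ) * l2)]
    have hle1 : (fun τ => u τ * σ τ) ≤ᵐ[volume.restrict (Set.Ioc (0:ℝ) η)] fun τ => ub * σ τ := by
      have hub' := ae_restrict_of_ae_restrict_of_subset (Set.Ioc_subset_Ioc le_rfl hη.2) hub
      filter_upwards [hub', ae_restrict_mem measurableSet_Ioc, ae_restrict_of_ae (hne' η)]
        with τ hb hmem hne''
      exact mul_le_mul_of_nonneg_right hb.2 (hσ1 τ ⟨hmem.1.le, lt_of_le_of_ne hmem.2 hne''⟩)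
    have hle2 : (fun τ => u τ * σ τ) ≤ᵐ[volume.restrict (Set.Ioc η T)] fun τ => ul * σ τ := by
      have hub2 := ae_restrict_of_ae_restrict_of_subset (Set.Ioc_subset_Ioc hη.1 le_rfl) hub
      filter_upwards [hub2, ae_restrict_mem measurableSet_Ioc] with τ hb hmem
      exact mul_le_mul_of_nonpos_right hb.1 (hσ2 τ hmem)
    have hineq := keyineq η hη ub ul hle1 hle2
    have hmemK : (ub • (∫ τ in (0:ℝ)..η, F τ) + ul • ∫ τ in η..T, F τ) ∈ K := by
      rw [← hξ₁ η]
      exact subset_convexHull ℝ _ (Or.inl ⟨η, hη, rfl⟩)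
    have := hfK _ hmemK
    linarith

/-- For a planar single-input system with `A` diagonalizable with real distinct
eigenvalues and box-bounded scalar control, the reachable set at time `T` from the origin
equals the convex hull of the union of the images of the one-switch bang-bang curves
`ξ₁` (ū then u̲) and `ξ₂` (u̲ then ū) over switching times `η ∈ [0,T]`. -/
theorem stmt6 (A V : Matrix (Fin 2) (Fin 2) ℝ) (l1 l2 : ℝ) (hl : l1 ≠ l2)
    (hV : IsUnit V.det) (hA : A = V * Matrix.diagonal ![l1, l2] * V⁻¹)
    (b : Fin 2 → ℝ) (T : ℝ) (hT : 0 < T) (ul ub : ℝ) (hbox : ul ≤ ub)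
    (ξ₁ ξ₂ : ℝ → Fin 2 → ℝ)
    (hξ₁ : ∀ η, ξ₁ η = ub • (∫ τ in (0 : ℝ)..η, NormedSpace.exp ((T - τ) • A) *ᵥ b) +
      ul • ∫ τ in η..T, NormedSpace.exp ((T - τ) • A) *ᵥ b)
    (hξ₂ : ∀ η, ξ₂ η = ul • (∫ τ in (0 : ℝ)..η, NormedSpace.exp ((T - τ) • A) *ᵥ b) +
      ub • ∫ τ in η..T, NormedSpace.exp ((T - τ) • A) *ᵥ b) :
    {x : Fin 2 → ℝ | ∃ u : ℝ → ℝ, Measurable u ∧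
      (∀ᵐ τ ∂(volume.restrict (Set.Ioc (0 : ℝ) T)), ul ≤ u τ ∧ u τ ≤ ub) ∧
      x = ∫ τ in (0 : ℝ)..T, u τ • (NormedSpace.exp ((T - τ) • A) *ᵥ b)} =
    convexHull ℝ (ξ₁ '' Set.Icc (0 : ℝ) T ∪ ξ₂ '' Set.Icc (0 : ℝ) T) := by
  have hVu : IsUnit V := (Matrix.isUnit_iff_isUnit_det V).2 hV
  set w : Fin 2 → ℝ := V⁻¹ *ᵥ b with hw
  set p : Fin 2 → ℝ := fun i => w 0 * V i 0 with hp
  set q : Fin 2 → ℝ := fun i => w 1 * V i 1 with hq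
  have hexp : ∀ τ : ℝ, NormedSpace.exp ((T - τ) • A)
      = V * Matrix.diagonal (fun i => Real.exp ((T - τ) * ![l1, l2] i)) * V⁻¹ := by
    intro τ
    rw [hA]
    have h1 : (T - τ) • (V * Matrix.diagonal ![l1, l2] * V⁻¹)
        = V * Matrix.diagonal ((T - τ) • ![l1, l2]) * V⁻¹ := by
      rw [Matrix.diagonal_smul, Matrix.mul_smul, Matrix.smul_mul]
    rw [h1, Matrix.exp_conj V _ hVu, Matrix.exp_diagonal]
    congr 1
    congr 1
    congr 1
    funext i
    rw [Pi.exp_def]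
    rw [← Real.exp_eq_exp_ℝ]
    simp [Pi.smul_apply, smul_eq_mul]
  have hFpt : ∀ τ : ℝ, NormedSpace.exp ((T - τ) • A) *ᵥ b
      = Real.exp ((T - τ) * l1) • p + Real.exp ((T - τ) * l2) • q := by
    intro τ
    rw [hexp τ]
    rw [← Matrix.mulVec_mulVec, ← Matrix.mulVec_mulVec]
    funext i
    simp only [Pi.add_apply, Pi.smul_apply, smul_eq_mul, hp, hq]
    rw [Matrix.mulVec]
    simp only [dotProduct, Fin.sum_univ_two, Matrix.mulVec_diagonal]
    simp [Matrix.cons_val_zero, Matrix.cons_val_one, Matrix.head_cons, hw]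
    ring
  simp only [hFpt] at hξ₁ hξ₂ ⊢
  exact key p q l1 l2 T ul ub hT hbox _ rfl ξ₁ ξ₂ hξ₁ hξ₂
end

section
/- Let p be even, q = p/(p−1), and u(t) = (−Bᵀ e^{−Aᵀ t} λ₀)^{1/(p−1)} componentwise (odd real roots). Then ∫₀^T ‖u(t)‖_p^p dt ≤ m ( ∫₀^T ‖vec(e^{−Aτ} B)‖_p^q dτ ) ‖λ₀‖_q^q. -/
open MeasureTheory Matrix

/-- Hölder bound on the `L^p` cost of the costate-driven control: with `p` even,
`q = p/(p−1)`, `g(t) = −Bᵀe^{−Aᵀt}λ₀` and `uᵢ(t)` its componentwise odd `(p−1)`-th root,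
`∫₀^T ‖u(t)‖_p^p dt ≤ m (∫₀^T ‖vec(e^{−Aτ}B)‖_p^q dτ) ‖λ₀‖_q^q`. -/
theorem stmt12 {n m : ℕ} (A : Matrix (Fin n) (Fin n) ℝ) (B : Matrix (Fin n) (Fin m) ℝ)
    (lam0 : Fin n → ℝ) (T : ℝ) (hT : 0 < T) (p : ℕ) (hp : Even p) (hp2 : 2 ≤ p)
    (q : ℝ) (hq : q = (p : ℝ) / ((p : ℝ) - 1))
    (g : ℝ → Fin m → ℝ)
    (hg : ∀ t, g t = -((Bᵀ * NormedSpace.exp ((-t) • Aᵀ)) *ᵥ lam0))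
    (u : ℝ → Fin m → ℝ)
    (hu : ∀ t i, u t i = |g t i| ^ ((1 : ℝ) / ((p : ℝ) - 1)) * Real.sign (g t i)) :
    (∫ t in (0 : ℝ)..T, ∑ i, |u t i| ^ (p : ℝ)) ≤
      (m : ℝ) *
        (∫ τ in (0 : ℝ)..T,
          (∑ i, ∑ j, |(NormedSpace.exp ((-τ) • A) * B) i j| ^ (p : ℝ)) ^ (q / p)) *
        ∑ i, |lam0 i| ^ q := by
  have hp1 : (1 : ℝ) < (p : ℝ) := by exact_mod_cast lt_of_lt_of_le one_lt_two hp2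
  have hp0 : (0 : ℝ) < (p : ℝ) := lt_trans one_pos hp1
  have hpq : ((p : ℝ)).HolderConjugate q :=
    (Real.holderConjugate_iff_eq_conjExponent hp1).2 hq
  have hq0 : 0 < q := hpq.symm.pos
  set M : ℝ → Matrix (Fin n) (Fin m) ℝ := fun τ => NormedSpace.exp ((-τ) • A) * B with hM
  set S : ℝ → ℝ := fun τ => ∑ i, ∑ j, |M τ i j| ^ (p : ℝ) with hS
  set L : ℝ := ∑ i, |lam0 i| ^ q with hL
  have hL0 : 0 ≤ L := Finset.sum_nonneg fun i _ => Real.rpow_nonneg (abs_nonneg _) _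
  -- |u t i| ^ p = |g t i| ^ q
  have key1 : ∀ t i, |u t i| ^ (p : ℝ) = |g t i| ^ q := by
    intro t i
    rw [hu]
    rcases eq_or_ne (g t i) 0 with h | h
    · simp [h, Real.zero_rpow (ne_of_gt hq0), Real.zero_rpow (ne_of_gt hp0)]
    · have h1 : |(|g t i| ^ ((1 : ℝ) / ((p : ℝ) - 1)) * Real.sign (g t i))| =
          |g t i| ^ ((1 : ℝ) / ((p : ℝ) - 1)) := by
        rw [abs_mul, abs_of_nonneg (Real.rpow_nonneg (abs_nonneg _) _)]
        rcases lt_or_gt_of_ne h with hlt | hgt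
        · rw [Real.sign_of_neg hlt]; simp
        · rw [Real.sign_of_pos hgt]; simp
      rw [h1, ← Real.rpow_mul (abs_nonneg _), div_mul_eq_mul_div, one_mul, ← hq]
  -- g in terms of M
  have hgM : ∀ t i, g t i = -∑ j, M t j i * lam0 j := by
    intro t i
    have ht : Bᵀ * NormedSpace.exp ((-t) • Aᵀ) = (M t)ᵀ := by
      rw [hM]
      rw [show ((-t) • Aᵀ) = ((-t) • A)ᵀ from (Matrix.transpose_smul _ _).symm,
        Matrix.exp_transpose, ← Matrix.transpose_mul]
    rw [hg, ht]
    simp [Matrix.mulVec, dotProduct, Matrix.transpose_apply]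
  -- pointwise bound
  have hpt : ∀ t, ∑ i, |g t i| ^ q ≤ (m : ℝ) * (S t) ^ (q / p) * L := by
    intro t
    have hS0 : 0 ≤ S t := Finset.sum_nonneg fun i _ =>
      Finset.sum_nonneg fun j _ => Real.rpow_nonneg (abs_nonneg _) _
    have hterm : ∀ i, |g t i| ^ q ≤ (S t) ^ (q / p) * L := by
      intro i
      set X : ℝ := ∑ j, |M t j i| ^ (p : ℝ) with hX
      have hX0 : 0 ≤ X := Finset.sum_nonneg fun j _ => Real.rpow_nonneg (abs_nonneg _) _
      have habs : |g t i| ≤ ∑ j, |M t j i| * |lam0 j| := by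
        rw [hgM, abs_neg]
        refine le_trans (Finset.abs_sum_le_sum_abs _ _) (le_of_eq ?_)
        exact Finset.sum_congr rfl fun j _ => abs_mul _ _
      have holder : ∑ j, |M t j i| * |lam0 j| ≤ X ^ ((1:ℝ)/p) * L ^ ((1:ℝ)/q) := by
        have h := Real.inner_le_Lp_mul_Lq Finset.univ (fun j => |M t j i|)
          (fun j => |lam0 j|) hpq
        simpa [abs_abs, hX, hL] using h
      have h2 : |g t i| ^ q ≤ (X ^ ((1:ℝ)/p) * L ^ ((1:ℝ)/q)) ^ q :=
        Real.rpow_le_rpow (abs_nonneg _) (le_trans habs holder) hq0.le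
      have h3 : (X ^ ((1:ℝ)/p) * L ^ ((1:ℝ)/q)) ^ q = X ^ (q / p) * L := by
        rw [Real.mul_rpow (Real.rpow_nonneg hX0 _) (Real.rpow_nonneg hL0 _),
          ← Real.rpow_mul hX0, ← Real.rpow_mul hL0, one_div_mul_eq_div,
          one_div_mul_cancel (ne_of_gt hq0), Real.rpow_one]
      have h4 : X ≤ S t := by
        refine Finset.sum_le_sum fun j _ => ?_
        exact Finset.single_le_sum (f := fun k => |M t j k| ^ (p : ℝ))
          (fun k _ => Real.rpow_nonneg (abs_nonneg _) _) (Finset.mem_univ i)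
      have h5 : X ^ (q / p) ≤ (S t) ^ (q / p) :=
        Real.rpow_le_rpow hX0 h4 (by positivity)
      calc |g t i| ^ q ≤ X ^ (q / p) * L := by rw [← h3]; exact h2
        _ ≤ (S t) ^ (q / p) * L := mul_le_mul_of_nonneg_right h5 hL0
    calc ∑ i, |g t i| ^ q ≤ ∑ _i : Fin m, (S t) ^ (q / p) * L :=
          Finset.sum_le_sum fun i _ => hterm i
      _ = (m : ℝ) * (S t) ^ (q / p) * L := by
          simp [Finset.sum_const, mul_assoc]
  -- continuity
  have hexp : Continuous fun t : ℝ => NormedSpace.exp ((-t) • A) := by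
    letI : NormedRing (Matrix (Fin n) (Fin n) ℝ) := Matrix.linftyOpNormedRing
    letI : NormedAlgebra ℝ (Matrix (Fin n) (Fin n) ℝ) := Matrix.linftyOpNormedAlgebra
    letI : NormedAlgebra ℚ (Matrix (Fin n) (Fin n) ℝ) := Matrix.linftyOpNormedAlgebra
    exact NormedSpace.exp_continuous.comp (continuous_neg.smul continuous_const)
  have hentry : ∀ (i : Fin n) (j : Fin m), Continuous fun τ => M τ i j := by
    intro i j
    simp only [hM, Matrix.mul_apply]
    exact continuous_finset_sum _ fun k _ =>
      ((continuous_apply k).comp ((continuous_apply i).comp hexp)).mul continuous_const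
  have hScont : Continuous S := by
    refine continuous_finset_sum _ fun i _ => continuous_finset_sum _ fun j _ => ?_
    exact ((hentry i j).abs).rpow_const fun x => Or.inr hp0.le
  have cont2 : Continuous fun τ => (S τ) ^ (q / p) :=
    hScont.rpow_const fun x => Or.inr (by positivity)
  have cont_g : Continuous fun t => ∑ i, |g t i| ^ q := by
    refine continuous_finset_sum _ fun i _ => ?_
    have : Continuous fun t => g t i := by
      simp only [hgM]
      exact (continuous_finset_sum _ fun j _ => (hentry j i).mul continuous_const).neg
    exact (this.abs).rpow_const fun x => Or.inr hq0.le
  -- putting it together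
  calc (∫ t in (0 : ℝ)..T, ∑ i, |u t i| ^ (p : ℝ))
      = ∫ t in (0 : ℝ)..T, ∑ i, |g t i| ^ q := by
        refine intervalIntegral.integral_congr fun t _ => ?_
        exact Finset.sum_congr rfl fun i _ => key1 t i
    _ ≤ ∫ t in (0 : ℝ)..T, (m : ℝ) * (S t) ^ (q / p) * L := by
        refine intervalIntegral.integral_mono_on hT.le
          (cont_g.intervalIntegrable 0 T)
          (((continuous_const.mul cont2).mul continuous_const).intervalIntegrable 0 T)
          fun t _ => hpt t
    _ = (m : ℝ) * (∫ τ in (0 : ℝ)..T, (S τ) ^ (q / p)) * L := by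
        have : ∀ t : ℝ, (m : ℝ) * (S t) ^ (q / p) * L = ((m : ℝ) * L) * ((S t) ^ (q / p)) :=
          fun t => by ring
        simp_rw [this, intervalIntegral.integral_const_mul]
        ring
end

section
/- For a compact convex set K ⊆ ℝ^n, K equals the closed convex hull of its exposed points: K = closure(convexHull(exposed points of K)). -/
open Set Metric
open scoped RealInnerProductSpace

/-- The convex hull of a compact set in `ℝⁿ` is compact (via Carathéodory). -/
lemma aux_isCompact_convexHull {n : ℕ} {s : Set (EuclideanSpace ℝ (Fin n))}
    (hs : IsCompact s) : IsCompact (convexHull ℝ s) := by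
  classical
  rcases s.eq_empty_or_nonempty with rfl | ⟨s₀, hs₀⟩
  · simp
  set N := n + 1
  -- the parameter space
  set T : Set ((Fin N → ℝ) × (Fin N → EuclideanSpace ℝ (Fin n))) :=
    (stdSimplex ℝ (Fin N)) ×ˢ (Set.univ.pi fun _ => s) with hT
  have hTcomp : IsCompact T :=
    (isCompact_stdSimplex (𝕜 := ℝ) (ι := Fin N)).prod (isCompact_univ_pi fun _ => hs)
  set f : (Fin N → ℝ) × (Fin N → EuclideanSpace ℝ (Fin n)) → EuclideanSpace ℝ (Fin n) := fun p => ∑ i, p.1 i • p.2 i with hf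
  have hfc : Continuous f := by
    apply continuous_finset_sum
    intro i _
    exact ((continuous_apply i).comp continuous_fst).smul
      ((continuous_apply i).comp continuous_snd)
  have himage : f '' T = convexHull ℝ s := by
    apply Set.Subset.antisymm
    · rintro x ⟨⟨w, z⟩, ⟨⟨hw0, hw1⟩, hz⟩, rfl⟩
      have : (Finset.univ : Finset (Fin N)).centerMass w z ∈ convexHull ℝ s := by
        apply Finset.centerMass_mem_convexHull
        · exact fun i _ => hw0 i
        · rw [hw1]; norm_num
        · intro i _; exact hz i (Set.mem_univ i)
      rwa [Finset.centerMass_eq_of_sum_1 _ _ hw1] at this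
    · intro x hx
      rw [convexHull_eq_union] at hx
      simp only [Set.mem_iUnion] at hx
      obtain ⟨t, hts, hai, hxt⟩ := hx
      -- card bound
      have hcard : t.card ≤ N := by
        have h1 := hai.card_le_finrank_succ
        have h2 : Module.finrank ℝ
            (vectorSpan ℝ (Set.range ((↑) : t → EuclideanSpace ℝ (Fin n)))) ≤ n := by
          have := Submodule.finrank_le
            (vectorSpan ℝ (Set.range ((↑) : t → EuclideanSpace ℝ (Fin n))))
          simpa [finrank_euclideanSpace_fin] using this
        simp only [Fintype.card_coe] at h1
        omega
      rw [Finset.convexHull_eq] at hxt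
      obtain ⟨w, hw0, hw1, hwx⟩ := hxt
      rw [Finset.centerMass_eq_of_sum_1 _ _ hw1] at hwx
      -- reindex through `Fin t.card`
      set σ : Fin t.card → EuclideanSpace ℝ (Fin n) := fun i => ((t.equivFin.symm i : t) : EuclideanSpace ℝ (Fin n)) with hσ
      have hσt : ∀ i, σ i ∈ t := fun i => (t.equivFin.symm i).2
      have hsum_w : ∑ i, w (σ i) = 1 := by
        rw [← hw1, ← Finset.sum_attach t (fun y => w y)]
        exact Equiv.sum_comp t.equivFin.symm (fun a : t => w (a : EuclideanSpace ℝ (Fin n)))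
      have hsum_x : ∑ i, w (σ i) • σ i = x := by
        rw [← hwx, ← Finset.sum_attach t (fun y => w y • id y)]
        exact Equiv.sum_comp t.equivFin.symm (fun a : t => w (a : EuclideanSpace ℝ (Fin n)) • (a : EuclideanSpace ℝ (Fin n)))
      -- pad to `Fin N`
      set W : Fin N → ℝ := fun j => if h : (j : ℕ) < t.card then w (σ ⟨j, h⟩) else 0 with hW
      set Z : Fin N → EuclideanSpace ℝ (Fin n) := fun j => if h : (j : ℕ) < t.card then σ ⟨j, h⟩ else s₀ with hZ
      have key : ∀ (G : Type) [AddCommMonoid G], ∀ g : Fin t.card → G,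
          ∑ j : Fin N, (if h : (j : ℕ) < t.card then g ⟨j, h⟩ else 0) = ∑ i, g i := by
        intro G _ g
        set F : ℕ → G := fun m => if h : m < t.card then g ⟨m, h⟩ else 0 with hF
        calc ∑ j : Fin N, (if h : (j : ℕ) < t.card then g ⟨j, h⟩ else 0)
            = ∑ m ∈ Finset.range N, F m := Fin.sum_univ_eq_sum_range F N
          _ = ∑ m ∈ Finset.range t.card, F m := by
              refine (Finset.sum_subset (Finset.range_subset_range.2 hcard) ?_).symm
              intro m _ hm
              rw [Finset.mem_range, not_lt] at hm
              simp only [hF]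
              rw [dif_neg (by omega)]
          _ = ∑ i : Fin t.card, F i := (Fin.sum_univ_eq_sum_range F t.card).symm
          _ = ∑ i, g i := Finset.sum_congr rfl fun i _ => by simp [hF]
      refine ⟨⟨W, Z⟩, ⟨⟨fun j => ?_, ?_⟩, fun j _ => ?_⟩, ?_⟩
      · by_cases h : (j : ℕ) < t.card
        · simp only [hW, dif_pos h]; exact hw0 _ (hσt _)
        · simp only [hW, dif_neg h]
          exact le_refl 0
      · have := key ℝ (fun i => w (σ i))
        simpa [hW, hsum_w] using this
      · by_cases h : (j : ℕ) < t.card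
        · simp only [hZ, dif_pos h]; exact hts (hσt _)
        · simp only [hZ, dif_neg h]; exact hs₀
      · show ∑ j, W j • Z j = x
        have : ∀ j, W j • Z j =
            if h : (j : ℕ) < t.card then w (σ ⟨j, h⟩) • σ ⟨j, h⟩ else 0 := by
          intro j
          by_cases h : (j : ℕ) < t.card
          · simp [hW, hZ, dif_pos h]
          · simp [hW, hZ, dif_neg h]
        rw [Finset.sum_congr rfl fun j _ => this j]
        rw [key (EuclideanSpace ℝ (Fin n)) (fun i => w (σ i) • σ i), hsum_x]
  rw [← himage]
  exact hTcomp.image hfc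

/-- A farthest point of `K` from any point `z` is an exposed point of `K`. -/
lemma aux_farthest_exposed {n : ℕ} {K : Set (EuclideanSpace ℝ (Fin n))}
    {z y : EuclideanSpace ℝ (Fin n)} (hy : y ∈ K)
    (hmax : ∀ y' ∈ K, dist y' z ≤ dist y z) : y ∈ K.exposedPoints ℝ := by
  rw [exposed_point_def]
  refine ⟨hy, innerSL ℝ (y - z), fun y' hy' => ?_⟩
  have hid : ‖y' - z‖ ^ 2 = ‖y' - y‖ ^ 2 + 2 * ⟪y' - y, y - z⟫ + ‖y - z‖ ^ 2 := by
    have : y' - z = (y' - y) + (y - z) := by abel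
    rw [this, norm_add_sq_real]
  have hle : ‖y' - z‖ ^ 2 ≤ ‖y - z‖ ^ 2 := by
    have := hmax y' hy'
    rw [dist_eq_norm, dist_eq_norm] at this
    exact pow_le_pow_left₀ (norm_nonneg _) this 2
  have hinner : ⟪y' - y, y - z⟫ = ⟪y - z, y'⟫ - ⟪y - z, y⟫ := by
    rw [real_inner_comm, inner_sub_right]
  constructor
  · show ⟪y - z, y'⟫ ≤ ⟪y - z, y⟫
    nlinarith [sq_nonneg ‖y' - y‖]
  · intro h
    have h' : ⟪y - z, y⟫ ≤ ⟪y - z, y'⟫ := h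
    have : ‖y' - y‖ ^ 2 ≤ 0 := by nlinarith
    have : ‖y' - y‖ = 0 := by nlinarith [norm_nonneg (y' - y)]
    have : y' - y = 0 := norm_eq_zero.1 this
    linear_combination (norm := abel) this

/-- Straszewicz: extreme points lie in the closure of the exposed points. -/
lemma aux_extreme_subset_closure_exposed {n : ℕ} {K : Set (EuclideanSpace ℝ (Fin n))}
    (hKcomp : IsCompact K) (hKconv : Convex ℝ K) :
    K.extremePoints ℝ ⊆ closure (K.exposedPoints ℝ) := by
  intro x hx
  have hxK : x ∈ K := hx.1
  rw [Metric.mem_closure_iff]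
  intro ε hε
  -- the set of points of K far from x
  set S : Set (EuclideanSpace ℝ (Fin n)) := K \ Metric.ball x ε with hS
  have hScomp : IsCompact S := hKcomp.diff Metric.isOpen_ball
  set C : Set (EuclideanSpace ℝ (Fin n)) := convexHull ℝ S with hC
  have hCcomp : IsCompact C := aux_isCompact_convexHull hScomp
  have hxC : x ∉ C := by
    have hconv_diff : Convex ℝ (K \ {x}) :=
      ((hKconv.mem_extremePoints_iff_convex_diff).1 hx).2
    intro hmem
    have : C ⊆ K \ {x} := convexHull_min (fun y hy =>
      ⟨hy.1, fun h => by
        apply hy.2; rw [h]; exact Metric.mem_ball_self hε⟩) hconv_diff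
    exact (this hmem).2 rfl
  rcases S.eq_empty_or_nonempty with hSemp | hSne
  · -- K ⊆ ball x ε : any farthest point from x is exposed and within ε of x
    have hKball : K ⊆ Metric.ball x ε := by
      intro y hy
      by_contra h
      exact absurd hSemp (Set.nonempty_iff_ne_empty.1 ⟨y, hy, h⟩)
    obtain ⟨y, hyK, hymax⟩ := hKcomp.exists_isMaxOn ⟨x, hxK⟩
      ((Continuous.dist continuous_id continuous_const :
        Continuous fun p => dist p x)).continuousOn
    refine ⟨y, aux_farthest_exposed hyK (fun y' hy' => hymax hy'), ?_⟩
    have := hKball hyK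
    rwa [Metric.mem_ball, dist_comm] at this
  · -- separate x from C, then farthest point from a distant center is exposed and near x
    obtain ⟨l, u, hlu, hux⟩ :=
      geometric_hahn_banach_closed_point (convex_convexHull ℝ S) hCcomp.isClosed hxC
    set c : EuclideanSpace ℝ (Fin n) := (InnerProductSpace.toDual ℝ _).symm l with hc
    have hcl : ∀ v, ⟪c, v⟫ = l v := fun v => InnerProductSpace.toDual_symm_apply
    set β : ℝ := l x - u with hβ
    have hβpos : 0 < β := by simp [hβ]; linarith
    -- bound on K
    obtain ⟨D, hD⟩ := hKcomp.isBounded.subset_ball x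
    have hD0 : 0 ≤ D := by
      have := Metric.mem_ball.1 (hD hxK)
      simp only [dist_self] at this
      exact le_of_lt this
    set t : ℝ := D ^ 2 / (2 * β) + 1 with ht
    have htpos : 0 < t := by positivity
    set z : EuclideanSpace ℝ (Fin n) := x - t • c with hz
    obtain ⟨y, hyK, hymax⟩ := hKcomp.exists_isMaxOn ⟨x, hxK⟩
      ((Continuous.dist continuous_id continuous_const :
        Continuous fun p => dist p z)).continuousOn
    have hymax' : ∀ y' ∈ K, dist y' z ≤ dist y z := fun y' hy' => hymax hy'
    refine ⟨y, aux_farthest_exposed hyK hymax', ?_⟩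
    -- show y ∈ ball x ε
    by_contra hfar
    have hyS : y ∈ S := ⟨hyK, fun h => hfar (by rwa [Metric.mem_ball, dist_comm] at h)⟩
    have hyC : y ∈ C := subset_convexHull ℝ S hyS
    have hly : l y < u := hlu y hyC
    -- compute
    have hxz : dist x z ^ 2 = t ^ 2 * ‖c‖ ^ 2 := by
      rw [dist_eq_norm]
      have : x - z = t • c := by simp [hz]
      rw [this, norm_smul, mul_pow]
      simp [abs_of_pos htpos]
    have hyz : dist y z ^ 2 = ‖y - x‖ ^ 2 + 2 * t * ⟪y - x, c⟫ + t ^ 2 * ‖c‖ ^ 2 := by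
      rw [dist_eq_norm]
      have : y - z = (y - x) + t • c := by simp [hz]; abel
      rw [this, norm_add_sq_real, real_inner_smul_right, norm_smul, mul_pow]
      simp [abs_of_pos htpos]; ring
    have hinner : ⟪y - x, c⟫ < -β := by
      have : ⟪c, y - x⟫ = l y - l x := by rw [hcl]; simp [map_sub]
      rw [real_inner_comm, this]
      simp [hβ]; linarith
    have hyD : ‖y - x‖ ≤ D := by
      have := Metric.mem_ball.1 (hD hyK)
      rw [dist_eq_norm] at this
      exact le_of_lt this
    have hyD2 : ‖y - x‖ ^ 2 ≤ D ^ 2 := pow_le_pow_left₀ (norm_nonneg _) hyD 2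
    have hcontra : dist y z ^ 2 < dist x z ^ 2 := by
      rw [hxz, hyz]
      have h1 : 2 * t * ⟪y - x, c⟫ < 2 * t * (-β) := by
        apply mul_lt_mul_of_pos_left hinner (by positivity)
      have h2 : D ^ 2 - 2 * t * β < 0 := by
        have : D ^ 2 / (2 * β) < t := by rw [ht]; linarith
        calc D ^ 2 - 2 * t * β < D ^ 2 - 2 * (D ^ 2 / (2 * β)) * β := by nlinarith
          _ = 0 := by field_simp; ring
      nlinarith
    have := hymax' x hxK
    have h2 : dist x z ^ 2 ≤ dist y z ^ 2 := pow_le_pow_left₀ dist_nonneg this 2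
    linarith

/-- Straszewicz-type theorem: a compact convex set in ℝⁿ is the closed convex
hull of its exposed points. -/
theorem stmt19 {n : ℕ} (K : Set (EuclideanSpace ℝ (Fin n)))
    (hKcomp : IsCompact K) (hKconv : Convex ℝ K) :
    closure (convexHull ℝ (K.exposedPoints ℝ)) = K := by
  apply Set.Subset.antisymm
  · exact closure_minimal (convexHull_min exposedPoints_subset hKconv) hKcomp.isClosed
  · conv_lhs => rw [← closure_convexHull_extremePoints hKcomp hKconv]
    apply closure_minimal ?_ isClosed_closure
    apply convexHull_min ?_ ((convex_convexHull ℝ _).closure)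
    calc K.extremePoints ℝ ⊆ closure (K.exposedPoints ℝ) :=
          aux_extreme_subset_closure_exposed hKcomp hKconv
      _ ⊆ closure (convexHull ℝ (K.exposedPoints ℝ)) :=
          closure_mono (subset_convexHull ℝ _)
end
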